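/- (Part of the inequality chain of Remark 1) In the IRS-aided wireless-powered MEC system where each offloading sub-slot may use its own IRS beamforming vector, NOMA offloading is no better than TDMA offloading: R_NOMA^3 ≤ R_TDMA^3. -/

import Mathlib

/-!
Take a feasible NOMA point and give each device `k` the best of the sub-slot beams,
`w_{j(k)}`. Every sub-slot rate is then at most `log₂ (1 + S / σ²)` with
`S = ∑ₖ pₖ gₖ(w_{j(k)})`, so NOMA achieves at most `s log₂ (1 + S / σ²)`, where `s` is the
total offloading time. TDMA reaches exactly that by time sharing: device `k` transmits during
the fraction `pₖ gₖ / S` of `s` with power `S / gₖ`, so its received SNR is again `S / σ²`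
while it spends the same energy `s pₖ` as before.
-/

open Finset

/-- Effective channel power gain of device `k` under IRS beamforming vector `v`. -/
noncomputable def gain {K N : ℕ} (h : Fin K → ℂ) (q : Fin K → Fin N → ℂ)
    (k : Fin K) (v : Fin N → ℂ) : ℝ :=
  ‖(starRingEnd ℂ) (h k) + ∑ n, (starRingEnd ℂ) (q k n) * v n‖ ^ 2

/-- Optimal computation rate of NOMA offloading with a possibly different IRS beamforming
vector in each of the `K` offloading sub-slots (Case 3). -/
noncomputable def RNOMA3 {K N : ℕ} (h : Fin K → ℂ) (q : Fin K → Fin N → ℂ)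
    (B T C γ η P σ2 : ℝ) : ℝ :=
  sSup {r : ℝ | ∃ (v₀ : Fin N → ℂ) (w : Fin K → Fin N → ℂ) (τ₀ : ℝ)
    (τ₁ : Fin K → ℝ) (p f : Fin K → ℝ),
    (∀ n, ‖v₀ n‖ = 1) ∧ (∀ i n, ‖w i n‖ = 1) ∧ 0 ≤ τ₀ ∧
    (∀ i, 0 ≤ τ₁ i) ∧ (∀ k, 0 ≤ p k) ∧ (∀ k, 0 ≤ f k) ∧ τ₀ + ∑ i, τ₁ i ≤ T ∧
    (∀ k, (∑ i, τ₁ i) * p k + T * γ * f k ^ 3 ≤ τ₀ * η * P * gain h q k v₀) ∧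
    r = B * ∑ i, τ₁ i * Real.logb 2 (1 + (∑ k, p k * gain h q k (w i)) / σ2)
        + ∑ k, T * f k / C}

/-- Optimal computation rate of TDMA offloading with a dedicated IRS beamforming vector in
each device's offloading slot (Case 3). -/
noncomputable def RTDMA3 {K N : ℕ} (h : Fin K → ℂ) (q : Fin K → Fin N → ℂ)
    (B T C γ η P σ2 : ℝ) : ℝ :=
  sSup {r : ℝ | ∃ (v₀ : Fin N → ℂ) (w : Fin K → Fin N → ℂ) (τ₀ : ℝ) (τ p f : Fin K → ℝ),
    (∀ n, ‖v₀ n‖ = 1) ∧ (∀ k n, ‖w k n‖ = 1) ∧ 0 ≤ τ₀ ∧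
    (∀ k, 0 ≤ τ k) ∧ (∀ k, 0 ≤ p k) ∧ (∀ k, 0 ≤ f k) ∧ τ₀ + ∑ k, τ k ≤ T ∧
    (∀ k, τ k * p k + T * γ * f k ^ 3 ≤ τ₀ * η * P * gain h q k v₀) ∧
    r = B * ∑ k, τ k * Real.logb 2 (1 + p k * gain h q k (w k) / σ2) + ∑ k, T * f k / C}

def nomaRates {K N : ℕ} (h : Fin K → ℂ) (q : Fin K → Fin N → ℂ)
    (B T C γ η P σ2 : ℝ) : Set ℝ :=
  {r : ℝ | ∃ (v₀ : Fin N → ℂ) (w : Fin K → Fin N → ℂ) (τ₀ : ℝ)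
    (τ₁ : Fin K → ℝ) (p f : Fin K → ℝ),
    (∀ n, ‖v₀ n‖ = 1) ∧ (∀ i n, ‖w i n‖ = 1) ∧ 0 ≤ τ₀ ∧
    (∀ i, 0 ≤ τ₁ i) ∧ (∀ k, 0 ≤ p k) ∧ (∀ k, 0 ≤ f k) ∧ τ₀ + ∑ i, τ₁ i ≤ T ∧
    (∀ k, (∑ i, τ₁ i) * p k + T * γ * f k ^ 3 ≤ τ₀ * η * P * gain h q k v₀) ∧
    r = B * ∑ i, τ₁ i * Real.logb 2 (1 + (∑ k, p k * gain h q k (w i)) / σ2)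
        + ∑ k, T * f k / C}

def tdmaRates {K N : ℕ} (h : Fin K → ℂ) (q : Fin K → Fin N → ℂ)
    (B T C γ η P σ2 : ℝ) : Set ℝ :=
  {r : ℝ | ∃ (v₀ : Fin N → ℂ) (w : Fin K → Fin N → ℂ) (τ₀ : ℝ) (τ p f : Fin K → ℝ),
    (∀ n, ‖v₀ n‖ = 1) ∧ (∀ k n, ‖w k n‖ = 1) ∧ 0 ≤ τ₀ ∧
    (∀ k, 0 ≤ τ k) ∧ (∀ k, 0 ≤ p k) ∧ (∀ k, 0 ≤ f k) ∧ τ₀ + ∑ k, τ k ≤ T ∧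
    (∀ k, τ k * p k + T * γ * f k ^ 3 ≤ τ₀ * η * P * gain h q k v₀) ∧
    r = B * ∑ k, τ k * Real.logb 2 (1 + p k * gain h q k (w k) / σ2) + ∑ k, T * f k / C}

lemma gain_nonneg {K N : ℕ} (h : Fin K → ℂ) (q : Fin K → Fin N → ℂ) (k : Fin K)
    (v : Fin N → ℂ) : 0 ≤ gain h q k v :=
  sq_nonneg _

lemma gain_le_of_norm_eq_one {K N : ℕ} (h : Fin K → ℂ) (q : Fin K → Fin N → ℂ) (k : Fin K)
    {v : Fin N → ℂ} (hv : ∀ n, ‖v n‖ = 1) :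
    gain h q k v ≤ (‖h k‖ + ∑ n, ‖q k n‖) ^ 2 := by
  unfold gain
  gcongr
  calc ‖(starRingEnd ℂ) (h k) + ∑ n, (starRingEnd ℂ) (q k n) * v n‖
      ≤ ‖(starRingEnd ℂ) (h k)‖ + ∑ n, ‖(starRingEnd ℂ) (q k n) * v n‖ :=
        (norm_add_le _ _).trans (by gcongr; exact norm_sum_le _ _)
    _ = ‖h k‖ + ∑ n, ‖q k n‖ := by simp only [norm_mul, Complex.norm_conj, hv, mul_one]

lemma Real.logb_one_add_le {b x : ℝ} (hb : 1 < b) (hx : -1 < x) :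
    Real.logb b (1 + x) ≤ x / Real.log b := by
  refine div_le_div_of_nonneg_right ?_ (Real.log_pos hb).le
  linarith [Real.log_le_sub_one_of_pos (x := 1 + x) (by linarith)]

lemma le_one_add_of_mul_pow_three_le {f γ M : ℝ} (hf : 0 ≤ f) (hγ : 0 < γ)
    (hfM : γ * f ^ 3 ≤ M) : f ≤ 1 + M / γ := by
  have hf3 : f ≤ 1 + f ^ 3 := by nlinarith [sq_nonneg (f - 1), sq_nonneg f]
  have : f ^ 3 ≤ M / γ := by rwa [le_div_iff₀ hγ, mul_comm]
  exact hf3.trans (by gcongr)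

theorem bddAbove_tdmaRates {K N : ℕ} (h : Fin K → ℂ) (q : Fin K → Fin N → ℂ)
    {B T C γ η P σ2 : ℝ} (hB : 0 ≤ B) (hT : 0 < T) (hC : 0 < C) (hγ : 0 < γ)
    (hη : 0 < η) (hP : 0 < P) (hσ : 0 < σ2) :
    BddAbove (tdmaRates h q B T C γ η P σ2) := by
  set G : Fin K → ℝ := fun k => (‖h k‖ + ∑ n, ‖q k n‖) ^ 2
  refine ⟨B * ∑ k, T * η * P * G k * G k / (σ2 * Real.log 2)
      + ∑ k, T * (1 + T * η * P * G k / (T * γ)) / C, ?_⟩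
  rintro _ ⟨v₀, w, τ₀, τ, p, f, hv₀, hw, hτ₀, hτ, hp, hf, htime, hen, rfl⟩
  have hτ₀T : τ₀ ≤ T := by linarith [sum_nonneg fun k (_ : k ∈ univ) => hτ k]
  have hharvest (k : Fin K) : τ₀ * η * P * gain h q k v₀ ≤ T * η * P * G k := by
    gcongr
    exacts [gain_nonneg h q k v₀, gain_le_of_norm_eq_one h q k hv₀]
  have hcpu (k : Fin K) : 0 ≤ T * γ * f k ^ 3 := by have := hf k; positivity
  gcongr with k _ k _
  · have hx : -1 < p k * gain h q k (w k) / σ2 := by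
      have := hp k; have := gain_nonneg h q k (w k)
      exact neg_one_lt_zero.trans_le (by positivity)
    calc τ k * Real.logb 2 (1 + p k * gain h q k (w k) / σ2)
        ≤ τ k * (p k * gain h q k (w k) / σ2 / Real.log 2) :=
          mul_le_mul_of_nonneg_left (Real.logb_one_add_le one_lt_two hx) (hτ k)
      _ = τ k * p k * gain h q k (w k) / (σ2 * Real.log 2) := by ring
      _ ≤ T * η * P * G k * G k / (σ2 * Real.log 2) := by
          have : τ k * p k ≤ T * η * P * G k := by linarith [hen k, hharvest k, hcpu k]
          have := hτ k; have := hp k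
          gcongr
          · exact gain_nonneg h q k _
          · exact gain_le_of_norm_eq_one h q k (hw k)
  · refine le_one_add_of_mul_pow_three_le (hf k) (by positivity) ?_
    linarith [hen k, hharvest k, mul_nonneg (hτ k) (hp k)]

lemma zero_mem_tdmaRates {K N : ℕ} (h : Fin K → ℂ) (q : Fin K → Fin N → ℂ)
    {T : ℝ} (B C γ η P σ2 : ℝ) (hT : 0 ≤ T) :
    0 ∈ tdmaRates h q B T C γ η P σ2 :=
  ⟨fun _ => 1, fun _ _ => 1, 0, 0, 0, 0, by simp, by simp, le_rfl, fun _ => le_rfl,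
    fun _ => le_rfl, fun _ => le_rfl, by simpa using hT, fun _ => by simp, by simp⟩

lemma exists_time_sharing {ι : Type*} [Fintype ι] (φ : ℝ → ℝ) (hφ : φ 0 = 0) {s : ℝ}
    (hs : 0 ≤ s) {p g : ι → ℝ} (hp : ∀ k, 0 ≤ p k) (hg : ∀ k, 0 ≤ g k) :
    ∃ τ p' : ι → ℝ, (∀ k, 0 ≤ τ k) ∧ (∀ k, 0 ≤ p' k) ∧ ∑ k, τ k ≤ s ∧
      (∀ k, τ k * p' k ≤ s * p k) ∧ ∑ k, τ k * φ (p' k * g k) = s * φ (∑ k, p k * g k) := by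
  set S := ∑ k, p k * g k
  have hpg (k : ι) : 0 ≤ p k * g k := mul_nonneg (hp k) (hg k)
  rcases (sum_nonneg fun k (_ : k ∈ univ) => hpg k).eq_or_lt' with hS | hS
  · refine ⟨0, 0, fun _ => le_rfl, fun _ => le_rfl, by simpa using hs,
      fun k => by simpa using mul_nonneg hs (hp k), by simp [S, hS, hφ]⟩
  -- A device with `g k = 0` gets no time, and the junk power `S / 0 = 0`.
  refine ⟨fun k => s * (p k * g k) / S, fun k => S / g k, fun k => by have := hpg k; positivity,
    fun k => div_nonneg hS.le (hg k), ?_, fun k => ?_, ?_⟩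
  · rw [← sum_div, ← mul_sum, mul_div_assoc, div_self hS.ne', mul_one]
  · rcases (hg k).eq_or_lt with hgk | hgk
    · simpa [← hgk] using mul_nonneg hs (hp k)
    · exact le_of_eq (by field_simp; exact mul_div_cancel_right₀ _ hS.ne')
  · have hterm (k : ι) : s * (p k * g k) / S * φ (S / g k * g k) = s * (p k * g k) / S * φ S := by
      rcases (hg k).eq_or_lt with hgk | hgk
      · simp [← hgk]
      · rw [div_mul_cancel₀ _ hgk.ne']
    rw [sum_congr rfl fun k _ => hterm k, ← sum_mul, ← sum_div, ← mul_sum,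
      mul_div_assoc, div_self hS.ne', mul_one]

theorem exists_ge_mem_tdmaRates_of_mem_nomaRates {K N : ℕ} (h : Fin K → ℂ)
    (q : Fin K → Fin N → ℂ) {B T C γ η P σ2 : ℝ} (hB : 0 ≤ B) (hσ : 0 < σ2) {r : ℝ}
    (hr : r ∈ nomaRates h q B T C γ η P σ2) : ∃ r' ∈ tdmaRates h q B T C γ η P σ2, r ≤ r' := by
  obtain ⟨v₀, w, τ₀, τ₁, p, f, hv₀, hw, hτ₀, hτ₁, hp, hf, htime, hen, rfl⟩ := hr
  choose j _ hj using fun k : Fin K =>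
    exists_max_image univ (fun i => gain h q k (w i)) ⟨k, mem_univ k⟩
  obtain ⟨τ, p', hτ, hp', hτs, hτp, hrate⟩ := exists_time_sharing
    (fun x => Real.logb 2 (1 + x / σ2)) (by simp) (sum_nonneg fun i _ => hτ₁ i) hp
    (fun k => gain_nonneg h q k (w (j k)))
  refine ⟨_, ⟨v₀, fun k => w (j k), τ₀, τ, p', f, hv₀, fun k => hw (j k), hτ₀, hτ, hp', hf,
    le_trans (by gcongr) htime, fun k => by linarith [hτp k, hen k], rfl⟩, ?_⟩
  beta_reduce at hrate ⊢
  rw [hrate, sum_mul]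
  gcongr B * ?_ + _
  refine sum_le_sum fun i _ => mul_le_mul_of_nonneg_left ?_ (hτ₁ i)
  refine Real.logb_le_logb_of_le one_lt_two ?_ ?_
  · exact add_pos_of_pos_of_nonneg one_pos <| div_nonneg
      (sum_nonneg fun k _ => mul_nonneg (hp k) (gain_nonneg h q k (w i))) hσ.le
  · gcongr 1 + ?_ / _
    exact sum_le_sum fun k _ => mul_le_mul_of_nonneg_left (hj k i (mem_univ i)) (hp k)

theorem RNOMA3_le_RTDMA3_general {K N : ℕ}
    (h : Fin K → ℂ) (q : Fin K → Fin N → ℂ) (B T C γ η P σ2 : ℝ)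
    (hB : 0 < B) (hT : 0 < T) (hC : 0 < C) (hγ : 0 < γ)
    (hη : 0 < η) (hP : 0 < P) (hσ : 0 < σ2) :
    RNOMA3 h q B T C γ η P σ2 ≤ RTDMA3 h q B T C γ η P σ2 := by
  have hbdd := bddAbove_tdmaRates h q hB.le hT hC hγ hη hP hσ
  show sSup (nomaRates h q B T C γ η P σ2) ≤ sSup (tdmaRates h q B T C γ η P σ2)
  refine Real.sSup_le (fun r hr => ?_) (le_csSup hbdd (zero_mem_tdmaRates h q B C γ η P σ2 hT.le))
  obtain ⟨r', hr', hrr'⟩ := exists_ge_mem_tdmaRates_of_mem_nomaRates h q hB.le hσ hr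
  exact hrr'.trans (le_csSup hbdd hr')

/-- Remark 1 (part of the inequality chain): `R_NOMA^{case3} ≤ R_TDMA^{case3}`. -/
theorem RNOMA3_le_RTDMA3 {K N : ℕ} (hK : 1 ≤ K) (hN : 1 ≤ N)
    (h : Fin K → ℂ) (q : Fin K → Fin N → ℂ) (B T C γ η P σ2 : ℝ)
    (hB : 0 < B) (hT : 0 < T) (hC : 0 < C) (hγ : 0 < γ)
    (hη : 0 < η) (hP : 0 < P) (hσ : 0 < σ2) :
    RNOMA3 h q B T C γ η P σ2 ≤ RTDMA3 h q B T C γ η P σ2 :=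
  RNOMA3_le_RTDMA3_general h q B T C γ η P σ2 hB hT hC hγ hη hP hσ
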